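/- For every integer r ≥ 1, in the group G, every integer k with c₁ᵏ ∈ H satisfies k = 0, where H is the subgroup of G generated by {b, d₁, d₂}; in particular c₁ has infinite order in G and the cosets Hc₁ⁱ for i = 0, 1, 2, … are pairwise distinct. -/

import Mathlib

/-- The "progression word" `x y^(s+1) x y^(s+2) ⋯ x y^(s+r)` in a group. -/
def wordProg {G : Type*} [Group G] (x y : G) (s r : ℕ) : G :=
  ((List.range r).map (fun k => x * y ^ (s + k + 1))).prod

/-- Generators of `G`: `0 = a`, `1 = b`, `2 = c₁`, `3 = c₂`, `4 = d₁`, `5 = d₂`.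
The relators are `a⁻¹b⁻¹ab C⁻¹`, `b⁻¹cᵢb Cᵢ⁻¹`, `(ab)⁻¹d_j(ab) D_j⁻¹`, and
`cᵢ⁻¹d_jcᵢ D_{ij}⁻¹` for `1 ≤ i,j ≤ 2`, where `C = (c₁c₂)(c₁c₂²)⋯(c₁c₂^r)`,
`Cᵢ = (c₁c₂^{ri+1})⋯(c₁c₂^{ri+r})`, `D_j = (d₁d₂^{rj+1})⋯(d₁d₂^{rj+r})`, and
`D_{ij} = (d₁d₂^{r(2i+j)+1})⋯(d₁d₂^{r(2i+j)+r})`. -/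
def GRels (r : ℕ) : Set (FreeGroup (Fin 6)) :=
  { w | (w = (FreeGroup.of (0 : Fin 6))⁻¹ * (FreeGroup.of (1 : Fin 6))⁻¹ *
            FreeGroup.of (0 : Fin 6) * FreeGroup.of (1 : Fin 6) *
            (wordProg (FreeGroup.of (2 : Fin 6)) (FreeGroup.of (3 : Fin 6)) 0 r)⁻¹) ∨
        (∃ i : Fin 2,
          w = (FreeGroup.of (1 : Fin 6))⁻¹ *
              FreeGroup.of (⟨i.val + 2, by omega⟩ : Fin 6) *
              FreeGroup.of (1 : Fin 6) *
              (wordProg (FreeGroup.of (2 : Fin 6)) (FreeGroup.of (3 : Fin 6))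
                (r * (i.val + 1)) r)⁻¹) ∨
        (∃ j : Fin 2,
          w = (FreeGroup.of (0 : Fin 6) * FreeGroup.of (1 : Fin 6))⁻¹ *
              FreeGroup.of (⟨j.val + 4, by omega⟩ : Fin 6) *
              (FreeGroup.of (0 : Fin 6) * FreeGroup.of (1 : Fin 6)) *
              (wordProg (FreeGroup.of (4 : Fin 6)) (FreeGroup.of (5 : Fin 6))
                (r * (j.val + 1)) r)⁻¹) ∨
        (∃ i j : Fin 2,
          w = (FreeGroup.of (⟨i.val + 2, by omega⟩ : Fin 6))⁻¹ *
              FreeGroup.of (⟨j.val + 4, by omega⟩ : Fin 6) *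
              FreeGroup.of (⟨i.val + 2, by omega⟩ : Fin 6) *
              (wordProg (FreeGroup.of (4 : Fin 6)) (FreeGroup.of (5 : Fin 6))
                (r * (2 * (i.val + 1) + (j.val + 1))) r)⁻¹) }

/-- `G = ⟨a,b,c₁,c₂,d₁,d₂ ∣ a⁻¹b⁻¹ab = C, b⁻¹cᵢb = Cᵢ, (ab)⁻¹d_j(ab) = D_j,
cᵢ⁻¹d_jcᵢ = D_{ij}, 1 ≤ i,j ≤ 2⟩`. -/
abbrev GG (r : ℕ) := PresentedGroup (GRels r)

/-!
`G` acts on `ℚ²` by affine maps: `c₁, c₂` act as the translations by `e₁, e₂`, `d₁, d₂` trivially,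
`b` by the inverse of the matrix `M` whose columns are the exponent vectors `(r, σ(r))`,
`(r, σ(2r))` of `C₁, C₂` in `c₁, c₂`, and `a` by the translation by the solution `u` of
`(M - 1) u = (r, σ(0))`, the exponent vector of `C`; here `σ(s) = rs + r(r+1)/2`. Both `M` and
`M - 1` are invertible, and the relations then hold because translations commute and conjugating
a translation by a linear map applies the map to its vector. The generators `b, d₁, d₂` of `H` fix
the origin, whereas `c₁ᵏ` moves it to `(k, 0)`.
-/

section Powers

variable {G : Type*} [Group G] {H : Subgroup G} {c : G}

theorem not_isOfFinOrder_of_zpow_mem_imp_eq_zero (hc : ∀ k : ℤ, c ^ k ∈ H → k = 0) :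
    ¬ IsOfFinOrder c := by
  intro hfin
  obtain ⟨n, hn, hpow⟩ := isOfFinOrder_iff_pow_eq_one.mp hfin
  have := hc n (by rw [zpow_natCast, hpow]; exact H.one_mem)
  omega

open Pointwise in
theorem injective_mul_singleton_pow_of_zpow_mem_imp_eq_zero (hc : ∀ k : ℤ, c ^ k ∈ H → k = 0) :
    Function.Injective fun i : ℕ => (H : Set G) * {c ^ i} := by
  intro i j hij
  simp only [Set.mul_singleton] at hij
  have : c ^ ((j : ℤ) - i) ∈ H := by
    rw [zpow_sub, zpow_natCast, zpow_natCast]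
    exact (rightCoset_eq_iff H).mp hij
  have := hc _ this
  omega

end Powers

theorem eq_zero_of_zpow_mem_closure {G X : Type*} [Group G] (φ : G →* Equiv.Perm X)
    {S : Set G} {c : G} {x : X} (hS : ∀ s ∈ S, φ s x = x) (hc : ∀ k : ℤ, (φ c ^ k) x = x → k = 0)
    {k : ℤ} (hk : c ^ k ∈ Subgroup.closure S) : k = 0 := by
  have hle : Subgroup.closure S ≤ (MulAction.stabilizer (Equiv.Perm X) x).comap φ :=
    (Subgroup.closure_le _).mpr hS
  exact hc k (by simpa using hle hk)

section WordProg

variable {G : Type*} [Group G]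

def wordProgExponent (s r : ℕ) : ℕ := ∑ k ∈ Finset.range r, (s + k + 1)

theorem wordProgExponent_succ (s r : ℕ) :
    wordProgExponent s (r + 1) = wordProgExponent s r + (s + r + 1) :=
  Finset.sum_range_succ _ _

theorem two_mul_wordProgExponent (s r : ℕ) :
    2 * wordProgExponent s r = r * (2 * s + r + 1) := by
  induction r with
  | zero => simp [wordProgExponent]
  | succ r ih =>
    rw [wordProgExponent_succ, mul_add, ih]
    ring

theorem map_wordProg {K : Type*} [Group K] (f : G →* K) (x y : G) (s r : ℕ) :
    f (wordProg x y s r) = wordProg (f x) (f y) s r := by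
  simp [wordProg, map_list_prod, Function.comp_def]

theorem wordProg_of_commute {x y : G} (h : Commute x y) (s r : ℕ) :
    wordProg x y s r = x ^ r * y ^ wordProgExponent s r := by
  induction r with
  | zero => simp [wordProg, wordProgExponent]
  | succ r ih =>
    have hE : y ^ wordProgExponent s r * x = x * y ^ wordProgExponent s r :=
      (h.pow_right _).eq.symm
    rw [wordProg, List.range_succ, List.map_append, List.prod_append, ← wordProg, ih,
      wordProgExponent_succ]
    simp only [List.map_cons, List.map_nil, List.prod_cons, List.prod_nil, mul_one]
    rw [pow_succ, pow_add, mul_assoc, ← mul_assoc _ x, hE]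
    group

theorem wordProg_one (s r : ℕ) : wordProg (1 : G) 1 s r = 1 := by
  simp [wordProg_of_commute (Commute.one_left (1 : G))]

end WordProg

theorem lift_eq_one_of_mem_GRels {r : ℕ} {K : Type*} [Group K] {a b c₁ c₂ : K}
    (hab : a⁻¹ * b⁻¹ * a * b = wordProg c₁ c₂ 0 r)
    (hc₁ : b⁻¹ * c₁ * b = wordProg c₁ c₂ r r)
    (hc₂ : b⁻¹ * c₂ * b = wordProg c₁ c₂ (r * 2) r) :
    ∀ w ∈ GRels r, FreeGroup.lift ![a, b, c₁, c₂, 1, 1] w = 1 := by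
  rintro w (rfl | ⟨i, rfl⟩ | ⟨j, rfl⟩ | ⟨i, j, rfl⟩) <;>
    rw [map_mul, map_inv, mul_inv_eq_one, map_wordProg]
  · simpa using hab
  · fin_cases i
    · simpa using hc₁
    · simpa using hc₂
  · fin_cases j <;> simp [wordProg_one]
  · fin_cases i <;> fin_cases j <;> simp [wordProg_one]

section Affine

variable {V : Type*} [AddCommGroup V]

theorem addEquiv_mul_addLeft_mul_inv (L : V ≃+ V) (v : V) :
    L.toEquiv * Equiv.addLeft v * L.toEquiv⁻¹ = Equiv.addLeft (L v) := by
  ext p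
  simp

theorem commute_addLeft (v w : V) : Commute (Equiv.addLeft v) (Equiv.addLeft w) := by
  rw [Commute, SemiconjBy, ← Equiv.addLeft_add, ← Equiv.addLeft_add, add_comm]

theorem wordProg_addLeft (v w : V) (s r : ℕ) :
    wordProg (Equiv.addLeft v) (Equiv.addLeft w) s r =
      Equiv.addLeft (r • v + wordProgExponent s r • w) := by
  rw [wordProg_of_commute (commute_addLeft v w), Equiv.nsmul_addLeft, Equiv.nsmul_addLeft,
    Equiv.addLeft_add]

theorem lift_affine_eq_one_of_mem_GRels {r : ℕ} (L : V ≃+ V) {u e₁ e₂ : V}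
    (hu : L u - u = r • e₁ + wordProgExponent 0 r • e₂)
    (he₁ : L e₁ = r • e₁ + wordProgExponent r r • e₂)
    (he₂ : L e₂ = r • e₁ + wordProgExponent (r * 2) r • e₂) :
    ∀ w ∈ GRels r, FreeGroup.lift
      ![Equiv.addLeft u, L.toEquiv⁻¹, Equiv.addLeft e₁, Equiv.addLeft e₂, 1, 1] w = 1 := by
  apply lift_eq_one_of_mem_GRels <;> rw [wordProg_addLeft, inv_inv]
  · rw [mul_assoc _ L.toEquiv, mul_assoc, addEquiv_mul_addLeft_mul_inv, Equiv.neg_addLeft,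
      ← Equiv.addLeft_add, neg_add_eq_sub, hu]
  · rw [addEquiv_mul_addLeft_mul_inv, he₁]
  · rw [addEquiv_mul_addLeft_mul_inv, he₂]

end Affine

-- The values are never divisible by 3.
theorem two_mul_pow_three_sub_ne_zero (n : ℤ) : 2 * n ^ 3 - 5 * n ^ 2 - 3 * n + 2 ≠ 0 := by
  intro h
  have h3 := congrArg (Int.cast : ℤ → ZMod 3) h
  push_cast at h3
  revert h3
  generalize (n : ZMod 3) = x
  revert x
  decide

section Representation

open Matrix

variable (r : ℕ)

def conjMatrix : Matrix (Fin 2) (Fin 2) ℚ :=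
  !![(r : ℚ), r; wordProgExponent r r, wordProgExponent (r * 2) r]

theorem cast_wordProgExponent (s : ℕ) :
    (wordProgExponent s r : ℚ) = r * (2 * s + r + 1) / 2 := by
  rw [eq_div_iff two_ne_zero, mul_comm]
  exact_mod_cast two_mul_wordProgExponent s r

theorem det_conjMatrix : (conjMatrix r).det = r ^ 3 := by
  rw [conjMatrix, Matrix.det_fin_two_of, cast_wordProgExponent, cast_wordProgExponent]
  push_cast
  ring

theorem det_conjMatrix_sub_one_ne_zero : (conjMatrix r - 1).det ≠ 0 := by
  have h : 2 * (conjMatrix r - 1).det = 2 * (r : ℚ) ^ 3 - 5 * r ^ 2 - 3 * r + 2 := by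
    rw [Matrix.det_fin_two]
    simp only [conjMatrix, cast_wordProgExponent, Nat.cast_mul, Nat.cast_ofNat, Fin.isValue,
      Matrix.sub_apply, Matrix.of_apply, Matrix.cons_val', Matrix.cons_val_zero,
      Matrix.cons_val_fin_one, Matrix.one_apply_eq, Matrix.cons_val_one, ne_eq, zero_ne_one,
      not_false_eq_true, Matrix.one_apply_ne, sub_zero, one_ne_zero]
    ring
  intro h0
  apply two_mul_pow_three_sub_ne_zero r
  exact_mod_cast (h0 ▸ h).symm.trans (mul_zero 2)

noncomputable def translationA : Fin 2 → ℚ :=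
  (conjMatrix r - 1)⁻¹ *ᵥ ![(r : ℚ), wordProgExponent 0 r]

theorem nsmul_basis_add_nsmul_basis (m n : ℕ) :
    m • ![(1 : ℚ), 0] + n • ![0, 1] = ![(m : ℚ), n] := by
  ext i
  fin_cases i <;> simp

variable {r}

theorem isUnit_conjMatrix (hr : 1 ≤ r) : IsUnit (conjMatrix r) := by
  rw [Matrix.isUnit_iff_isUnit_det, det_conjMatrix, isUnit_iff_ne_zero]
  positivity

noncomputable def conjEquiv (hr : 1 ≤ r) : (Fin 2 → ℚ) ≃+ (Fin 2 → ℚ) :=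
  (LinearEquiv.ofBijective (conjMatrix r).mulVecLin
    ⟨Matrix.mulVec_injective_iff_isUnit.mpr (isUnit_conjMatrix hr),
      Matrix.mulVec_surjective_iff_isUnit.mpr (isUnit_conjMatrix hr)⟩).toAddEquiv

theorem conjEquiv_apply (hr : 1 ≤ r) (v : Fin 2 → ℚ) : conjEquiv hr v = conjMatrix r *ᵥ v :=
  rfl

theorem conjEquiv_translationA_sub (hr : 1 ≤ r) :
    conjEquiv hr (translationA r) - translationA r =
      r • ![(1 : ℚ), 0] + wordProgExponent 0 r • ![0, 1] := by
  have hsub : ∀ v, conjMatrix r *ᵥ v - v = (conjMatrix r - 1) *ᵥ v := fun v => by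
    rw [Matrix.sub_mulVec, Matrix.one_mulVec]
  rw [conjEquiv_apply, hsub, translationA, Matrix.mulVec_mulVec, Matrix.mul_nonsing_inv _
    (isUnit_iff_ne_zero.mpr (det_conjMatrix_sub_one_ne_zero r)), Matrix.one_mulVec,
    nsmul_basis_add_nsmul_basis]

theorem conjEquiv_vec_one_zero (hr : 1 ≤ r) :
    conjEquiv hr ![1, 0] = r • ![(1 : ℚ), 0] + wordProgExponent r r • ![0, 1] := by
  rw [conjEquiv_apply, nsmul_basis_add_nsmul_basis]
  ext i
  fin_cases i <;> simp [conjMatrix]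

theorem conjEquiv_vec_zero_one (hr : 1 ≤ r) :
    conjEquiv hr ![0, 1] = r • ![(1 : ℚ), 0] + wordProgExponent (r * 2) r • ![0, 1] := by
  rw [conjEquiv_apply, nsmul_basis_add_nsmul_basis]
  ext i
  fin_cases i <;> simp [conjMatrix]

noncomputable def affineRep (hr : 1 ≤ r) : GG r →* Equiv.Perm (Fin 2 → ℚ) :=
  PresentedGroup.toGroup (lift_affine_eq_one_of_mem_GRels (conjEquiv hr)
    (conjEquiv_translationA_sub hr) (conjEquiv_vec_one_zero hr) (conjEquiv_vec_zero_one hr))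

end Representation

open Pointwise in
/-- For every `r ≥ 1`, in the group `G`, the only integer `k` with `c₁ᵏ ∈ H` is
`k = 0`, where `H = ⟨b, d₁, d₂⟩`; in particular `c₁` has infinite order in `G`
and the right cosets `H·c₁ⁱ` for `i = 0, 1, 2, …` are pairwise distinct. -/
theorem c1_powers_meet_H_trivially (r : ℕ) (hr : 1 ≤ r) :
    (∀ k : ℤ, (PresentedGroup.of (2 : Fin 6) : GG r) ^ k ∈
        Subgroup.closure ({(PresentedGroup.of (1 : Fin 6) : GG r),
          PresentedGroup.of (4 : Fin 6), PresentedGroup.of (5 : Fin 6)} : Set (GG r)) →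
      k = 0) ∧
    ¬ IsOfFinOrder (PresentedGroup.of (2 : Fin 6) : GG r) ∧
    (∀ i j : ℕ, i ≠ j →
      (Subgroup.closure ({(PresentedGroup.of (1 : Fin 6) : GG r),
          PresentedGroup.of (4 : Fin 6), PresentedGroup.of (5 : Fin 6)} : Set (GG r)) :
        Set (GG r)) * {(PresentedGroup.of (2 : Fin 6) : GG r) ^ i} ≠
      (Subgroup.closure ({(PresentedGroup.of (1 : Fin 6) : GG r),
          PresentedGroup.of (4 : Fin 6), PresentedGroup.of (5 : Fin 6)} : Set (GG r)) :
        Set (GG r)) * {(PresentedGroup.of (2 : Fin 6) : GG r) ^ j}) := by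
  have key : ∀ k : ℤ, (PresentedGroup.of (2 : Fin 6) : GG r) ^ k ∈
      Subgroup.closure ({(PresentedGroup.of (1 : Fin 6) : GG r),
        PresentedGroup.of (4 : Fin 6), PresentedGroup.of (5 : Fin 6)} : Set (GG r)) → k = 0 := by
    intro k hk
    refine eq_zero_of_zpow_mem_closure (affineRep hr) (x := 0) ?_ ?_ hk
    · rintro s (rfl | rfl | rfl) <;> simp [affineRep]
    · intro k hk
      simpa [affineRep] using congrFun hk 0
  exact ⟨key, not_isOfFinOrder_of_zpow_mem_imp_eq_zero key,
    fun i j => (injective_mul_singleton_pow_of_zpow_mem_imp_eq_zero key).ne⟩
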